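/- Let c > 0 be a constant and p ≤ c/n. Then there exists α > 0 (depending only on c) such that asymptotically almost surely every vertex subset S of G(n,p) with 1 ≤ |S| ≤ αn induces at most 1.1·|S| edges (equivalently, the induced subgraph has average degree at most 2.2). -/

import Mathlib

open scoped Classical

/-- The number of edges of a graph on `Fin n`. -/
noncomputable def edgeCount (n : ℕ) (G : SimpleGraph (Fin n)) : ℕ :=
  G.edgeFinset.card

/-- The probability that the Erdős–Rényi random graph `G(n,p)` equals the fixed graph `G`. -/
noncomputable def erWeight (n : ℕ) (p : ℝ) (G : SimpleGraph (Fin n)) : ℝ :=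
  p ^ edgeCount n G * (1 - p) ^ (n.choose 2 - edgeCount n G)

/-- The probability that `G(n,p)` lies in the set of graphs `A`. -/
noncomputable def erProb (n : ℕ) (p : ℝ) (A : Set (SimpleGraph (Fin n))) : ℝ :=
  ∑ G : SimpleGraph (Fin n), if G ∈ A then erWeight n p G else 0

/-- The number of edges of `G` with both endpoints in `S`. -/
noncomputable def inducedEdgeCount (n : ℕ) (G : SimpleGraph (Fin n)) (S : Finset (Fin n)) : ℕ :=
  (G.edgeFinset.filter fun e => ∀ x ∈ e, x ∈ S).card

lemma sum_graphs_eq (n : ℕ) (f : Finset (Sym2 (Fin n)) → ℝ) :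
    ∑ G : SimpleGraph (Fin n), f G.edgeFinset
      = ∑ F ∈ (⊤ : SimpleGraph (Fin n)).edgeFinset.powerset, f F := by
  refine Finset.sum_nbij' (fun G => G.edgeFinset) (fun F => SimpleGraph.fromEdgeSet ↑F) ?_ ?_ ?_ ?_ ?_
  · intro G _
    simp only [Finset.mem_powerset]
    exact SimpleGraph.edgeFinset_mono le_top
  · intro F _; exact Finset.mem_univ _
  · intro G _
    simp [SimpleGraph.coe_edgeFinset, SimpleGraph.fromEdgeSet_edgeSet]
  · intro F hF
    rw [Finset.mem_powerset] at hF
    have hnd : ∀ e ∈ (F : Set (Sym2 (Fin n))), ¬ e.IsDiag := by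
      intro e he
      exact SimpleGraph.not_isDiag_of_mem_edgeSet _ (SimpleGraph.mem_edgeFinset.mp (hF he))
    ext e
    simp only [SimpleGraph.mem_edgeFinset, SimpleGraph.edgeSet_fromEdgeSet]
    constructor
    · rintro ⟨he, -⟩; exact he
    · intro he; exact ⟨he, hnd e he⟩
  · intro G _; rfl

lemma binom_sum {β : Type*} [DecidableEq β] (T : Finset β) (p : ℝ) :
    ∑ D ∈ T.powerset, p ^ D.card * (1 - p) ^ (T.card - D.card) = 1 := by
  have h := Finset.prod_add (fun _ : β => p) (fun _ : β => (1 - p)) T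
  simp only [Finset.prod_const] at h
  have : ∀ D ∈ T.powerset, p ^ D.card * (1 - p) ^ (T.card - D.card)
      = p ^ D.card * (1 - p) ^ (T \ D).card := by
    intro D hD
    rw [Finset.card_sdiff_of_subset (Finset.mem_powerset.mp hD)]
  rw [Finset.sum_congr rfl this, ← h]
  norm_num

lemma marginal (n : ℕ) (p : ℝ) (F : Finset (Sym2 (Fin n)))
    (hF : F ⊆ (⊤ : SimpleGraph (Fin n)).edgeFinset) :
    ∑ G : SimpleGraph (Fin n), (if F ⊆ G.edgeFinset then erWeight n p G else 0)
      = p ^ F.card := by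
  classical
  set K := (⊤ : SimpleGraph (Fin n)).edgeFinset with hK
  have hKcard : K.card = n.choose 2 := by
    rw [hK, SimpleGraph.card_edgeFinset_top_eq_card_choose_two, Fintype.card_fin]
  have h1 : ∀ G : SimpleGraph (Fin n),
      (if F ⊆ G.edgeFinset then erWeight n p G else 0)
      = (fun F' : Finset (Sym2 (Fin n)) =>
          if F ⊆ F' then p ^ F'.card * (1 - p) ^ (n.choose 2 - F'.card) else 0) G.edgeFinset :=
    fun G => rfl
  rw [Finset.sum_congr rfl (fun G _ => h1 G),
    sum_graphs_eq n (fun F' => if F ⊆ F' then p ^ F'.card * (1 - p) ^ (n.choose 2 - F'.card) else 0)]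
  rw [← Finset.sum_filter]
  have key : ∑ F' ∈ K.powerset.filter (fun F' => F ⊆ F'),
        p ^ F'.card * (1 - p) ^ (n.choose 2 - F'.card)
      = ∑ D ∈ (K \ F).powerset, p ^ (F.card + D.card) * (1 - p) ^ ((K \ F).card - D.card) := by
    refine Finset.sum_nbij' (fun F' => F' \ F) (fun D => F ∪ D) ?_ ?_ ?_ ?_ ?_
    · intro F' hF'
      simp only [Finset.mem_filter, Finset.mem_powerset] at hF' ⊢
      exact Finset.sdiff_subset_sdiff hF'.1 (le_refl F)
    · intro D hD
      simp only [Finset.mem_powerset] at hD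
      simp only [Finset.mem_filter, Finset.mem_powerset]
      exact ⟨Finset.union_subset hF (hD.trans (Finset.sdiff_subset)), Finset.subset_union_left⟩
    · intro F' hF'
      simp only [Finset.mem_filter, Finset.mem_powerset] at hF'
      exact Finset.union_sdiff_of_subset hF'.2
    · intro D hD
      simp only [Finset.mem_powerset] at hD
      exact Finset.union_sdiff_cancel_left
        (Finset.disjoint_of_subset_right hD Finset.disjoint_sdiff)
    · intro F' hF'
      simp only [Finset.mem_filter, Finset.mem_powerset] at hF'
      have h1 : F.card + (F' \ F).card = F'.card := by
        rw [add_comm]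
        exact Finset.card_sdiff_add_card_eq_card hF'.2
      have h2 : (K \ F).card - (F' \ F).card = n.choose 2 - F'.card := by
        rw [Finset.card_sdiff_of_subset hF, Finset.card_sdiff_of_subset hF'.2, hKcard]
        omega
      rw [h1, h2]
  rw [key]
  have : ∀ D ∈ (K \ F).powerset, p ^ (F.card + D.card) * (1 - p) ^ ((K \ F).card - D.card)
      = p ^ F.card * (p ^ D.card * (1 - p) ^ ((K \ F).card - D.card)) := by
    intro D _; rw [pow_add, mul_assoc]
  rw [Finset.sum_congr rfl this, ← Finset.mul_sum, binom_sum, mul_one]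

lemma erWeight_nonneg {n : ℕ} {p : ℝ} (hp0 : 0 ≤ p) (hp1 : p ≤ 1) (G : SimpleGraph (Fin n)) :
    0 ≤ erWeight n p G :=
  mul_nonneg (pow_nonneg hp0 _) (pow_nonneg (by linarith) _)

lemma sum_erWeight (n : ℕ) (p : ℝ) : ∑ G : SimpleGraph (Fin n), erWeight n p G = 1 := by
  have h := marginal n p ∅ (Finset.empty_subset _)
  simpa using h

lemma erProb_nonneg {n : ℕ} {p : ℝ} (hp0 : 0 ≤ p) (hp1 : p ≤ 1) (A : Set (SimpleGraph (Fin n))) :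
    0 ≤ erProb n p A :=
  Finset.sum_nonneg fun G _ => by
    by_cases h : G ∈ A <;> simp [h, erWeight_nonneg hp0 hp1]

lemma erProb_add_compl {n : ℕ} {p : ℝ} (A : Set (SimpleGraph (Fin n))) :
    erProb n p A + erProb n p Aᶜ = 1 := by
  rw [erProb, erProb, ← Finset.sum_add_distrib]
  rw [← sum_erWeight n p]
  apply Finset.sum_congr rfl
  intro G _
  by_cases h : G ∈ A <;> simp [h]

lemma erProb_le_sum {n : ℕ} {p : ℝ} (hp0 : 0 ≤ p) (hp1 : p ≤ 1) {ι : Type*} (I : Finset ι)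
    (A : Set (SimpleGraph (Fin n))) (B : ι → Set (SimpleGraph (Fin n)))
    (h : ∀ G ∈ A, ∃ i ∈ I, G ∈ B i) :
    erProb n p A ≤ ∑ i ∈ I, erProb n p (B i) := by
  rw [erProb]
  have : ∑ i ∈ I, erProb n p (B i)
      = ∑ G : SimpleGraph (Fin n), ∑ i ∈ I, (if G ∈ B i then erWeight n p G else 0) := by
    rw [Finset.sum_comm]
    rfl
  rw [this]
  apply Finset.sum_le_sum
  intro G _
  by_cases hG : G ∈ A
  · simp only [hG, if_true]
    obtain ⟨i0, hi0, hBi0⟩ := h G hG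
    have := Finset.single_le_sum (f := fun i => if G ∈ B i then erWeight n p G else 0)
      (fun i _ => by by_cases h : G ∈ B i <;> simp [h, erWeight_nonneg hp0 hp1]) hi0
    simpa [hBi0] using this
  · simp only [hG, if_false]
    exact Finset.sum_nonneg fun i _ => by
      by_cases h : G ∈ B i <;> simp [h, erWeight_nonneg hp0 hp1]

lemma per_set {n : ℕ} {p : ℝ} (hp0 : 0 ≤ p) (hp1 : p ≤ 1) (S : Finset (Fin n))
    (hS : 1 ≤ S.card) :
    erProb n p {G | ¬ ((inducedEdgeCount n G S : ℝ) ≤ 1.1 * S.card)}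
      ≤ ((S.card ^ 2).choose (S.card + S.card / 10 + 1) : ℝ)
        * p ^ (S.card + S.card / 10 + 1) := by
  classical
  set s := S.card with hs
  set k := s + s / 10 + 1 with hk
  set K := (⊤ : SimpleGraph (Fin n)).edgeFinset with hKdef
  set T := S.sym2 ∩ K with hT
  have hstep : erProb n p {G | ¬ ((inducedEdgeCount n G S : ℝ) ≤ 1.1 * s)}
      ≤ ∑ F ∈ T.powersetCard k, erProb n p {G | F ⊆ G.edgeFinset} := by
    apply erProb_le_sum hp0 hp1
    intro G hG
    simp only [Set.mem_setOf_eq, not_le] at hG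
    have hkle : k ≤ inducedEdgeCount n G S := by
      have h10 : (11 * s : ℝ) < 10 * inducedEdgeCount n G S := by
        have : (1.1 : ℝ) * s = 11 * s / 10 := by ring
        rw [this] at hG
        linarith
      have : 11 * s < 10 * inducedEdgeCount n G S := by exact_mod_cast h10
      omega
    obtain ⟨F, hFsub, hFcard⟩ := Finset.exists_subset_card_eq hkle
    refine ⟨F, ?_, ?_⟩
    · rw [Finset.mem_powersetCard]
      refine ⟨?_, hFcard⟩
      intro e he
      have he' := hFsub he
      rw [Finset.mem_filter] at he'
      rw [hT, Finset.mem_inter]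
      exact ⟨Finset.mem_sym2_iff.mpr he'.2, SimpleGraph.edgeFinset_mono le_top he'.1⟩
    · intro e he
      exact (Finset.mem_filter.mp (hFsub he)).1
  have hTK : T ⊆ K := Finset.inter_subset_right
  have hmarg : ∀ F ∈ T.powersetCard k, erProb n p {G | F ⊆ G.edgeFinset} = p ^ k := by
    intro F hF
    rw [Finset.mem_powersetCard] at hF
    have hm := marginal n p F (hF.1.trans hTK)
    rw [hF.2] at hm
    rw [erProb, ← hm]
    apply Finset.sum_congr rfl
    intro G _
    have : (G ∈ {G : SimpleGraph (Fin n) | F ⊆ G.edgeFinset}) = (F ⊆ G.edgeFinset) :=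
      Set.mem_setOf_eq
    congr 1
  rw [Finset.sum_congr rfl hmarg, Finset.sum_const, Finset.card_powersetCard,
    nsmul_eq_mul] at hstep
  refine hstep.trans ?_
  apply mul_le_mul_of_nonneg_right _ (pow_nonneg hp0 _)
  have hTcard : T.card ≤ s ^ 2 := by
    have h1 : T.card ≤ (s + 1).choose 2 := by
      rw [← Finset.card_sym2 S]
      exact Finset.card_le_card Finset.inter_subset_left
    have h2 : (s + 1).choose 2 = (s + 1) * s / 2 := by
      rw [Nat.choose_two_right]; simp
    have h3 : (s + 1) * s ≤ 2 * s ^ 2 := by nlinarith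
    have h4 : (s + 1) * s / 2 ≤ 2 * s ^ 2 / 2 := Nat.div_le_div_right h3
    have h5 : 2 * s ^ 2 / 2 = s ^ 2 := Nat.mul_div_cancel_left _ (by norm_num)
    omega
  exact_mod_cast Nat.choose_le_choose k hTcard

lemma pow_self_le_three_pow_factorial (s : ℕ) : (s : ℝ) ^ s ≤ 3 ^ s * (s.factorial : ℝ) := by
  induction s with
  | zero => simp
  | succ m ih =>
    have h0 : ((m : ℝ) + 1) ^ m ≤ 3 * (m : ℝ) ^ m := by
      rcases Nat.eq_zero_or_pos m with hm | hm
      · subst hm; norm_num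
      · have hmpos : (0 : ℝ) < m := by exact_mod_cast hm
        have h1 : (1 + 1 / (m : ℝ)) ≤ Real.exp (1 / m) := by
          have := Real.add_one_le_exp (1 / (m : ℝ))
          linarith
        have h2 : (1 + 1 / (m : ℝ)) ^ m ≤ Real.exp (1 / m) ^ m := by
          apply pow_le_pow_left₀ (by positivity) h1
        have h3 : Real.exp (1 / (m : ℝ)) ^ m = Real.exp 1 := by
          rw [← Real.exp_nat_mul]
          congr 1
          field_simp
        have h4 : Real.exp 1 ≤ 3 := by
          have := Real.exp_one_lt_d9
          linarith
        have h5 : (1 + 1 / (m : ℝ)) ^ m ≤ 3 := by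
          rw [h3] at h2; linarith
        have h6 : ((m : ℝ) + 1) = (1 + 1 / (m : ℝ)) * m := by field_simp
        calc ((m : ℝ) + 1) ^ m = (1 + 1 / (m : ℝ)) ^ m * (m : ℝ) ^ m := by
              rw [h6, mul_pow]
        _ ≤ 3 * (m : ℝ) ^ m := by
              apply mul_le_mul_of_nonneg_right h5 (by positivity)
    have hm1 : (0 : ℝ) ≤ (m : ℝ) + 1 := by positivity
    calc ((m + 1 : ℕ) : ℝ) ^ (m + 1) = ((m : ℝ) + 1) * ((m : ℝ) + 1) ^ m := by
          push_cast; ring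
    _ ≤ ((m : ℝ) + 1) * (3 * (m : ℝ) ^ m) := by
          apply mul_le_mul_of_nonneg_left h0 hm1
    _ ≤ ((m : ℝ) + 1) * (3 * (3 ^ m * (m.factorial : ℝ))) := by
          apply mul_le_mul_of_nonneg_left (by nlinarith [pow_nonneg (show (0:ℝ) ≤ m by positivity) m]) hm1
    _ = 3 ^ (m + 1) * (((m + 1) * m.factorial : ℕ) : ℝ) := by push_cast; ring
    _ = 3 ^ (m + 1) * ((m + 1).factorial : ℝ) := by rw [Nat.factorial_succ]

lemma choose_sq_le {s k : ℕ} (hs : 1 ≤ s) (hsk : s ≤ k) :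
    (((s ^ 2).choose k : ℕ) : ℝ) ≤ (3 * s) ^ k := by
  have hkfac : (0 : ℝ) < (k.factorial : ℝ) := by exact_mod_cast k.factorial_pos
  have h1 : (((s ^ 2).choose k : ℕ) : ℝ) ≤ ((s ^ 2 : ℕ) : ℝ) ^ k / (k.factorial : ℝ) :=
    Nat.choose_le_pow_div k (s ^ 2)
  have h2 : (s : ℝ) ^ k ≤ 3 ^ k * (k.factorial : ℝ) := by
    calc (s : ℝ) ^ k ≤ (k : ℝ) ^ k := by
          apply pow_le_pow_left₀ (by positivity)
          exact_mod_cast hsk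
    _ ≤ 3 ^ k * (k.factorial : ℝ) := pow_self_le_three_pow_factorial k
  have hs0 : (0 : ℝ) ≤ (s : ℝ) ^ k := by positivity
  calc (((s ^ 2).choose k : ℕ) : ℝ) ≤ ((s ^ 2 : ℕ) : ℝ) ^ k / (k.factorial : ℝ) := h1
  _ ≤ (3 * s) ^ k := by
      rw [div_le_iff₀ hkfac]
      push_cast
      calc ((s : ℝ) ^ 2) ^ k = (s : ℝ) ^ k * (s : ℝ) ^ k := by ring
      _ ≤ (s : ℝ) ^ k * (3 ^ k * (k.factorial : ℝ)) := by
            apply mul_le_mul_of_nonneg_left h2 hs0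
      _ = (3 * s) ^ k * (k.factorial : ℝ) := by rw [mul_pow]; ring

lemma choose_n_le {n s : ℕ} (hs : 1 ≤ s) :
    ((n.choose s : ℕ) : ℝ) ≤ 3 ^ s * (n : ℝ) ^ s / (s : ℝ) ^ s := by
  have hsfac : (0 : ℝ) < (s.factorial : ℝ) := by exact_mod_cast s.factorial_pos
  have hss : (0 : ℝ) < (s : ℝ) ^ s := by
    have : (0:ℝ) < (s:ℝ) := by exact_mod_cast hs
    positivity
  have h1 : ((n.choose s : ℕ) : ℝ) ≤ ((n : ℕ) : ℝ) ^ s / (s.factorial : ℝ) :=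
    Nat.choose_le_pow_div s n
  have h2 : (s : ℝ) ^ s ≤ 3 ^ s * (s.factorial : ℝ) := pow_self_le_three_pow_factorial s
  calc ((n.choose s : ℕ) : ℝ) ≤ ((n : ℕ) : ℝ) ^ s / (s.factorial : ℝ) := h1
  _ ≤ 3 ^ s * (n : ℝ) ^ s / (s : ℝ) ^ s := by
      rw [div_le_div_iff₀ hsfac hss]
      calc (n : ℝ) ^ s * (s : ℝ) ^ s ≤ (n : ℝ) ^ s * (3 ^ s * (s.factorial : ℝ)) := by
            apply mul_le_mul_of_nonneg_left h2 (by positivity)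
      _ = 3 ^ s * (n : ℝ) ^ s * (s.factorial : ℝ) := by ring

lemma term_bound (c : ℝ) (hc : 0 < c) {n s : ℕ} (hn : 1 ≤ n) (hs : 1 ≤ s)
    {p : ℝ} (hp0 : 0 ≤ p) (hpn : p ≤ c / n)
    (hα : (s : ℝ) ≤ (1 / (2 * (3 * c * (max 1 (9 * c)) ^ 10))) * n) :
    (n.choose s : ℝ) * (((s ^ 2).choose (s + s / 10 + 1)) : ℝ) * p ^ (s + s / 10 + 1)
      ≤ (2 * (3 * c * (max 1 (9 * c)) ^ 10) / n) * s * (((1:ℝ)/2) ^ ((1:ℝ)/10)) ^ s := by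
  set D : ℝ := max 1 (9 * c) with hD
  set E : ℝ := 3 * c * D ^ 10 with hE
  set k : ℕ := s + s / 10 + 1 with hkdef
  set m : ℕ := s / 10 + 1 with hmdef
  have hkm : k = s + m := by omega
  have hD1 : (1 : ℝ) ≤ D := le_max_left _ _
  have hD9c : 9 * c ≤ D := le_max_right _ _
  have hD0 : (0 : ℝ) < D := lt_of_lt_of_le one_pos hD1
  have hEpos : (0 : ℝ) < E := by positivity
  have hn' : (0 : ℝ) < n := by exact_mod_cast hn
  have hs' : (0 : ℝ) < s := by exact_mod_cast hs
  have hcn : (0 : ℝ) ≤ c / n := by positivity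
  have hsk : s ≤ k := by omega
  -- Step 1
  have h1 : (n.choose s : ℝ) * (((s ^ 2).choose k) : ℝ) * p ^ k
      ≤ (3 ^ s * (n : ℝ) ^ s / (s : ℝ) ^ s) * ((3 * s) ^ k) * (c / n) ^ k := by
    apply mul_le_mul
    · apply mul_le_mul (choose_n_le hs) (choose_sq_le hs hsk) (by positivity) (by positivity)
    · exact pow_le_pow_left₀ hp0 hpn k
    · positivity
    · positivity
  -- Step 2: rewrite
  have h2 : (3 ^ s * (n : ℝ) ^ s / (s : ℝ) ^ s) * ((3 * s) ^ k) * (c / n) ^ k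
      = (3 * n / s) ^ s * (3 * c * s / n) ^ k := by
    ring
  have h3 : (3 * n / s) ^ s * (3 * c * (s : ℝ) / n) ^ k
      = ((9 * c) ^ s) * (3 * c * (s : ℝ) / n) ^ m := by
    rw [hkm, pow_add, ← mul_assoc, ← mul_pow]
    congr 2
    field_simp
    ring
  have hx0 : (0 : ℝ) ≤ 3 * c * (s : ℝ) / n := by positivity
  have h5 : ((9 * c) ^ s : ℝ) ≤ (D ^ 10) ^ m := by
    calc ((9 * c) ^ s : ℝ) ≤ D ^ s := pow_le_pow_left₀ (by positivity) hD9c s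
    _ ≤ D ^ (10 * m) := pow_le_pow_right₀ hD1 (by omega)
    _ = (D ^ 10) ^ m := by rw [pow_mul]
  have h6 : ((9 * c) ^ s : ℝ) * (3 * c * (s : ℝ) / n) ^ m ≤ (E * s / n) ^ m := by
    calc ((9 * c) ^ s : ℝ) * (3 * c * (s : ℝ) / n) ^ m
        ≤ (D ^ 10) ^ m * (3 * c * (s : ℝ) / n) ^ m := by
          apply mul_le_mul_of_nonneg_right h5 (by positivity)
    _ = (D ^ 10 * (3 * c * (s : ℝ) / n)) ^ m := by rw [mul_pow]
    _ = (E * s / n) ^ m := by rw [hE]; ring_nf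
  set z : ℝ := E * s / n with hz
  have hz0 : (0 : ℝ) ≤ z := by positivity
  have hzhalf : z ≤ 1 / 2 := by
    have h1 : E * (s : ℝ) ≤ E * ((1 / (2 * E)) * n) := by
      apply mul_le_mul_of_nonneg_left hα (le_of_lt hEpos)
    have h2 : E * ((1 / (2 * E)) * (n : ℝ)) = n / 2 := by
      field_simp
    rw [hz, div_le_iff₀ hn']
    linarith
  have h8 : z ^ m ≤ z * ((1:ℝ)/2) ^ (s / 10) := by
    rw [hmdef, pow_succ']
    apply mul_le_mul_of_nonneg_left _ hz0
    exact pow_le_pow_left₀ hz0 hzhalf _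
  set r : ℝ := ((1:ℝ)/2) ^ ((1:ℝ)/10) with hr
  have h9 : ((1:ℝ)/2) ^ (s / 10) ≤ 2 * r ^ s := by
    have hjour : ((1:ℝ)/2) ^ (s / 10) = ((1:ℝ)/2) ^ ((s / 10 : ℕ) : ℝ) := by
      rw [Real.rpow_natCast]
    have hexp : (s : ℝ) / 10 - 1 ≤ ((s / 10 : ℕ) : ℝ) := by
      have h10 : 10 * (s / 10) + 10 ≥ s := by omega
      have : (s : ℝ) ≤ 10 * ((s / 10 : ℕ) : ℝ) + 10 := by exact_mod_cast h10
      linarith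
    have hmono : ((1:ℝ)/2) ^ (((s / 10 : ℕ) : ℝ)) ≤ ((1:ℝ)/2) ^ ((s : ℝ) / 10 - 1) :=
      Real.rpow_le_rpow_of_exponent_ge (by norm_num) (by norm_num) hexp
    have hsplit : ((1:ℝ)/2) ^ ((s : ℝ) / 10 - 1) = 2 * r ^ s := by
      rw [sub_eq_add_neg, Real.rpow_add (by norm_num : (0:ℝ) < 1/2)]
      have e1 : ((1:ℝ)/2) ^ (-1 : ℝ) = 2 := by
        rw [Real.rpow_neg_one]
        norm_num
      have e2 : ((1:ℝ)/2) ^ ((s : ℝ) / 10) = r ^ s := by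
        have : (s : ℝ) / 10 = (1:ℝ)/10 * s := by ring
        rw [this, Real.rpow_mul (by norm_num : (0:ℝ) ≤ 1/2), Real.rpow_natCast]
      rw [e1, e2]
      ring
    rw [hjour]
    exact hmono.trans (le_of_eq hsplit)
  calc (n.choose s : ℝ) * (((s ^ 2).choose k) : ℝ) * p ^ k
      ≤ (3 * n / s) ^ s * (3 * c * s / n) ^ k := by rw [← h2]; exact h1
  _ = ((9 * c) ^ s) * (3 * c * (s : ℝ) / n) ^ m := h3
  _ ≤ z ^ m := h6
  _ ≤ z * ((1:ℝ)/2) ^ (s / 10) := h8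
  _ ≤ z * (2 * r ^ s) := by
      apply mul_le_mul_of_nonneg_left h9 hz0
  _ = (2 * E / n) * s * r ^ s := by rw [hz]; ring

lemma geom_const : ∃ C : ℝ, 0 ≤ C ∧ ∀ I : Finset ℕ,
    ∑ s ∈ I, (s : ℝ) * (((1:ℝ)/2) ^ ((1:ℝ)/10)) ^ s ≤ C := by
  set r : ℝ := ((1:ℝ)/2) ^ ((1:ℝ)/10) with hr
  have hr0 : 0 ≤ r := Real.rpow_nonneg (by norm_num) _
  have hr1 : r < 1 := Real.rpow_lt_one (by norm_num) (by norm_num) (by norm_num)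
  have hsum : Summable (fun s : ℕ => (s : ℝ) * r ^ s) := by
    have h := summable_pow_mul_geometric_of_norm_lt_one (R := ℝ) 1
      (r := r) (by rwa [Real.norm_eq_abs, abs_of_nonneg hr0])
    simpa using h
  refine ⟨∑' s : ℕ, (s : ℝ) * r ^ s, tsum_nonneg (fun s => by positivity), fun I => ?_⟩
  exact Summable.sum_le_tsum I (fun s _ => by positivity) hsum


/-- For `p ≤ c/n` there is `α > 0` such that a.a.s. every set `S` of at most `αn` vertices of
`G(n,p)` induces at most `1.1|S|` edges. -/
theorem small_sets_sparse (c : ℝ) (hc : 0 < c) (p : ℕ → ℝ)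
    (hp0 : ∀ n, 0 ≤ p n) (hp1 : ∀ n, p n ≤ 1)
    (hpc : ∀ n : ℕ, 1 ≤ n → p n ≤ c / n) :
    ∃ α > (0 : ℝ),
      Filter.Tendsto
        (fun n : ℕ => erProb n (p n)
          {G | ∀ S : Finset (Fin n), 1 ≤ S.card → (S.card : ℝ) ≤ α * n →
            (inducedEdgeCount n G S : ℝ) ≤ 1.1 * S.card})
        Filter.atTop (nhds 1) := by
  classical
  set D : ℝ := max 1 (9 * c) with hD
  set E : ℝ := 3 * c * D ^ 10 with hE
  have hD1 : (1 : ℝ) ≤ D := le_max_left _ _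
  have hEpos : (0 : ℝ) < E := by positivity
  set α : ℝ := 1 / (2 * E) with hα
  have hαpos : 0 < α := by positivity
  refine ⟨α, hαpos, ?_⟩
  obtain ⟨C, hC0, hCbound⟩ := geom_const
  set r : ℝ := ((1:ℝ)/2) ^ ((1:ℝ)/10) with hr
  have hr0 : 0 ≤ r := Real.rpow_nonneg (by norm_num) _
  set good : ∀ n : ℕ, Set (SimpleGraph (Fin n)) := fun n =>
    {G | ∀ S : Finset (Fin n), 1 ≤ S.card → (S.card : ℝ) ≤ α * n →
      (inducedEdgeCount n G S : ℝ) ≤ 1.1 * S.card} with hgood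
  have hup : ∀ n : ℕ, erProb n (p n) (good n) ≤ 1 := by
    intro n
    have h1 := erProb_add_compl (n := n) (p := p n) (good n)
    have h2 := erProb_nonneg (hp0 n) (hp1 n) (good n)ᶜ
    linarith
  have hlow : ∀ n : ℕ, 1 ≤ n → 1 - 2 * E * C / n ≤ erProb n (p n) (good n) := by
    intro n hn
    have hn' : (0 : ℝ) < n := by exact_mod_cast hn
    suffices hbad : erProb n (p n) (good n)ᶜ ≤ 2 * E * C / n by
      have h1 := erProb_add_compl (n := n) (p := p n) (good n)
      linarith
    set I : Finset (Finset (Fin n)) :=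
      Finset.univ.filter (fun S => 1 ≤ S.card ∧ (S.card : ℝ) ≤ α * n) with hI
    have step1 : erProb n (p n) (good n)ᶜ
        ≤ ∑ S ∈ I, erProb n (p n) {G | ¬ ((inducedEdgeCount n G S : ℝ) ≤ 1.1 * S.card)} := by
      apply erProb_le_sum (hp0 n) (hp1 n)
      intro G hG
      simp only [hgood, Set.mem_compl_iff, Set.mem_setOf_eq, not_forall] at hG
      obtain ⟨S, hS1, hS2, hS3⟩ := hG
      exact ⟨S, by simp only [hI, Finset.mem_filter, Finset.mem_univ, true_and]; exact ⟨hS1, hS2⟩, hS3⟩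
    have step2 : ∑ S ∈ I, erProb n (p n) {G | ¬ ((inducedEdgeCount n G S : ℝ) ≤ 1.1 * S.card)}
        ≤ ∑ S ∈ I, (((S.card ^ 2).choose (S.card + S.card / 10 + 1) : ℕ) : ℝ)
            * (p n) ^ (S.card + S.card / 10 + 1) := by
      apply Finset.sum_le_sum
      intro S hS
      rw [hI, Finset.mem_filter] at hS
      exact per_set (hp0 n) (hp1 n) S hS.2.1
    set f : ℕ → ℝ := fun s => (((s ^ 2).choose (s + s / 10 + 1) : ℕ) : ℝ)
        * (p n) ^ (s + s / 10 + 1) with hf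
    have hf0 : ∀ s, 0 ≤ f s := fun s => mul_nonneg (by positivity) (pow_nonneg (hp0 n) _)
    have step3 : ∑ S ∈ I, f S.card
        = ∑ s ∈ Finset.range (n + 1), ∑ S ∈ I.filter (fun S => S.card = s), f S.card := by
      symm
      apply Finset.sum_fiberwise_of_maps_to
      intro S _
      rw [Finset.mem_range]
      exact Nat.lt_succ_of_le (le_trans (Finset.card_le_card (Finset.subset_univ S))
        (by simp [Finset.card_univ]))
    have step4 : ∀ s ∈ Finset.range (n + 1),
        ∑ S ∈ I.filter (fun S => S.card = s), f S.card ≤ (2 * E / n) * s * r ^ s := by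
      intro s _
      rcases Finset.eq_empty_or_nonempty (I.filter (fun S => S.card = s)) with he | ⟨S₀, hS₀⟩
      · rw [he, Finset.sum_empty]
        positivity
      · rw [Finset.mem_filter, hI, Finset.mem_filter] at hS₀
        obtain ⟨⟨-, hs1, hs2⟩, hcard⟩ := hS₀
        rw [hcard] at hs1 hs2
        have hfiber : ∑ S ∈ I.filter (fun S => S.card = s), f S.card
            = (I.filter (fun S => S.card = s)).card * f s := by
          rw [Finset.sum_congr rfl (fun S hS => by
            rw [Finset.mem_filter] at hS
            rw [hS.2] : ∀ S ∈ I.filter (fun S => S.card = s), f S.card = f s),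
            Finset.sum_const, nsmul_eq_mul]
        have hfibcard : (I.filter (fun S => S.card = s)).card ≤ n.choose s := by
          have hsub : I.filter (fun S => S.card = s) ⊆ Finset.univ.powersetCard s := by
            intro S hS
            rw [Finset.mem_filter] at hS
            rw [Finset.mem_powersetCard]
            exact ⟨Finset.subset_univ S, hS.2⟩
          have := Finset.card_le_card hsub
          rwa [Finset.card_powersetCard, Finset.card_univ, Fintype.card_fin] at this
        calc ∑ S ∈ I.filter (fun S => S.card = s), f S.card
            = (I.filter (fun S => S.card = s)).card * f s := hfiber
        _ ≤ (n.choose s : ℝ) * f s := by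
            apply mul_le_mul_of_nonneg_right _ (hf0 s)
            exact_mod_cast hfibcard
        _ = (n.choose s : ℝ) * (((s ^ 2).choose (s + s / 10 + 1) : ℕ) : ℝ)
              * (p n) ^ (s + s / 10 + 1) := by rw [hf]; ring
        _ ≤ (2 * E / n) * s * r ^ s := by
            apply term_bound c hc hn hs1 (hp0 n) (hpc n hn)
            rw [← hE, ← hα]
            exact hs2
    have step5 : ∑ s ∈ Finset.range (n + 1), (2 * E / n) * s * r ^ s ≤ 2 * E * C / n := by
      have : ∑ s ∈ Finset.range (n + 1), (2 * E / n) * s * r ^ s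
          = (2 * E / n) * ∑ s ∈ Finset.range (n + 1), (s : ℝ) * r ^ s := by
        rw [Finset.mul_sum]
        apply Finset.sum_congr rfl
        intro s _
        ring
      rw [this]
      have h1 := hCbound (Finset.range (n + 1))
      calc (2 * E / n) * ∑ s ∈ Finset.range (n + 1), (s : ℝ) * r ^ s
          ≤ (2 * E / n) * C := by
            apply mul_le_mul_of_nonneg_left h1 (by positivity)
      _ = 2 * E * C / n := by ring
    calc erProb n (p n) (good n)ᶜ
        ≤ ∑ S ∈ I, f S.card := step1.trans step2
    _ = ∑ s ∈ Finset.range (n + 1), ∑ S ∈ I.filter (fun S => S.card = s), f S.card := step3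
    _ ≤ ∑ s ∈ Finset.range (n + 1), (2 * E / n) * s * r ^ s := Finset.sum_le_sum step4
    _ ≤ 2 * E * C / n := step5
  have hlim : Filter.Tendsto (fun n : ℕ => 1 - 2 * E * C / n) Filter.atTop (nhds 1) := by
    have h0 : Filter.Tendsto (fun n : ℕ => 2 * E * C * (1 / n)) Filter.atTop
        (nhds (2 * E * C * 0)) :=
      tendsto_one_div_atTop_nhds_zero_nat.const_mul _
    have h1 : Filter.Tendsto (fun n : ℕ => 2 * E * C / n) Filter.atTop (nhds 0) := by
      simpa [div_eq_mul_inv, mul_comm] using h0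
    have h2 := Filter.Tendsto.sub
      (tendsto_const_nhds : Filter.Tendsto (fun _ : ℕ => (1:ℝ)) Filter.atTop (nhds 1)) h1
    simpa using h2
  apply tendsto_of_tendsto_of_tendsto_of_le_of_le' hlim tendsto_const_nhds
  · filter_upwards [Filter.eventually_ge_atTop 1] with n hn
    exact hlow n hn
  · filter_upwards with n
    exact hup n
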